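/- Let 0 < p < μ < 1 be real numbers and set β = (μ − p)/(1 − p). Let X, T, S be mutually independent random variables on a probability space, each taking values in the positive integers, with P(X = j) = p·(1 − p)^{j−1}, P(T = j) = β·(1 − β)^{j−1}, and P(S = j) = μ·(1 − μ)^{j−1} for j = 1, 2, …. Then the average age of information Δ̄ = p·( E[X²]/2 + E[X]/2 + E[X·max(0, T − X)] + E[X]·E[S] ) satisfies Δ̄ = 1/p + p/μ + (1 − p)/(μ − p) − p/μ². -/

import Mathlib

/-!
`X - 1`, `T - 1` and `S - 1` follow Mathlib's `geometricMeasure` (failures before the first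
success), so each expectation in `Δ̄` is a weighted geometric series. The only term that does not
factor is `E[X · max(0, T - X)]`: for fixed `X = x + 1`, the expectation over `T` is
`(x + 1) (1 - β)^(x + 1) / β`, and averaging over `X` gives again a series `∑ (n + 1) rⁿ`,
now with `r = (1 - p)(1 - β) = 1 - μ`. What remains are the closed forms of `∑ (n + 1) rⁿ`
and `∑ (n + 1)² rⁿ` and field arithmetic.
-/

open MeasureTheory ProbabilityTheory

section GeometricSeries

variable {r : ℝ}

lemma hasSum_succ_mul_geometric (hr : |r| < 1) :
    HasSum (fun n : ℕ => ((n : ℝ) + 1) * r ^ n) (1 / (1 - r) ^ 2) := by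
  simpa using hasSum_choose_mul_geometric_of_norm_lt_one 1 (r := r) (by rwa [Real.norm_eq_abs])

lemma hasSum_succ_sq_mul_geometric (hr : |r| < 1) :
    HasSum (fun n : ℕ => ((n : ℝ) + 1) ^ 2 * r ^ n) ((1 + r) / (1 - r) ^ 3) := by
  have hr' : ‖r‖ < 1 := by rwa [Real.norm_eq_abs]
  have h1 : 1 - r ≠ 0 := by linarith [le_abs_self r]
  -- `(n + 1) ^ 2 = 2 * (n + 2).choose 2 - (n + 1).choose 1`
  have h := ((hasSum_choose_mul_geometric_of_norm_lt_one 2 hr').mul_left 2).sub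
    (hasSum_choose_mul_geometric_of_norm_lt_one 1 hr')
  convert! h using 1
  · funext n
    rw [Nat.cast_choose_two, Nat.choose_one_right]
    push_cast
    ring
  · field_simp
    ring

end GeometricSeries

lemma unitInterval.abs_one_sub_lt_one {q : unitInterval} (hq : q ≠ 0) : |1 - (q : ℝ)| < 1 := by
  have : (0 : ℝ) < q := unitInterval.pos_iff_ne_zero.2 hq
  rw [abs_lt]
  constructor <;> linarith [unitInterval.le_one q]

namespace ProbabilityTheory

section GeometricMeasure

variable {a b q : unitInterval}

lemma integral_geometricMeasure_of_hasSum (hq : q ≠ 0) {f : ℕ → ℝ} {c : ℝ}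
    (h : HasSum (fun n => (1 - q : ℝ) ^ n * q * f n) c) :
    ∫ n, f n ∂geometricMeasure q = c := by
  simpa only [integral_geometricMeasure hq, smul_eq_mul] using h.tsum_eq

lemma integrable_geometricMeasure_of_hasSum (hq : q ≠ 0) {f : ℕ → ℝ} (hf : ∀ n, 0 ≤ f n)
    {c : ℝ} (h : HasSum (fun n => (1 - q : ℝ) ^ n * q * f n) c) :
    Integrable f (geometricMeasure q) := by
  rw [integrable_geometricMeasure_iff hq]
  simpa only [Real.norm_of_nonneg (hf _)] using h.summable

lemma integral_succ_geometricMeasure (hq : q ≠ 0) :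
    ∫ n, ((n : ℝ) + 1) ∂geometricMeasure q = 1 / (q : ℝ) := by
  have hq0 : (q : ℝ) ≠ 0 := unitInterval.coe_ne_zero.2 hq
  refine integral_geometricMeasure_of_hasSum hq ?_
  convert! (hasSum_succ_mul_geometric (unitInterval.abs_one_sub_lt_one hq)).mul_left (q : ℝ)
    using 1
  · funext n
    ring
  · rw [sub_sub_cancel]
    field_simp

lemma integral_succ_sq_geometricMeasure (hq : q ≠ 0) :
    ∫ n, ((n : ℝ) + 1) ^ 2 ∂geometricMeasure q = (2 - q : ℝ) / q ^ 2 := by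
  have hq0 : (q : ℝ) ≠ 0 := unitInterval.coe_ne_zero.2 hq
  refine integral_geometricMeasure_of_hasSum hq ?_
  convert! (hasSum_succ_sq_mul_geometric (unitInterval.abs_one_sub_lt_one hq)).mul_left (q : ℝ)
    using 1
  · funext n
    ring
  · rw [sub_sub_cancel]
    field_simp
    ring

lemma hasSum_max_sub_geometricMeasure (hq : q ≠ 0) (x : ℕ) :
    HasSum (fun n : ℕ => (1 - q : ℝ) ^ n * q * max 0 ((n : ℝ) - x))
      ((1 - q : ℝ) ^ (x + 1) / q) := by
  have hq0 : (q : ℝ) ≠ 0 := unitInterval.coe_ne_zero.2 hq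
  set f : ℕ → ℝ := fun n => (1 - q : ℝ) ^ n * q * max 0 ((n : ℝ) - x)
  have hshift : HasSum (fun n => f (n + x)) ((1 - q) ^ (x + 1) / q) := by
    convert! (hasSum_coe_mul_geometric_of_norm_lt_one (r := 1 - (q : ℝ))
      (by rw [Real.norm_eq_abs]; exact unitInterval.abs_one_sub_lt_one hq)).mul_left
        ((1 - q : ℝ) ^ x * q) using 1
    · funext n
      simp only [f, Nat.cast_add, add_sub_cancel_right, max_eq_right (Nat.cast_nonneg n), pow_add]
      ring
    · rw [sub_sub_cancel]
      field_simp
      ring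
  have hzero : ∑ n ∈ Finset.range x, f n = 0 := by
    refine Finset.sum_eq_zero fun n hn => ?_
    have : (n : ℝ) ≤ x := by exact_mod_cast (Finset.mem_range.1 hn).le
    simp only [f, max_eq_left (sub_nonpos.2 this), mul_zero]
  rw [← hasSum_nat_add_iff' x, hzero, sub_zero]
  exact hshift

lemma integral_prod_geometricMeasure_of_hasSum (ha : a ≠ 0) (hb : b ≠ 0)
    {g : ℕ → ℕ → ℝ} (hg : ∀ x y, 0 ≤ g x y) {G : ℕ → ℝ} {c : ℝ}
    (hG : ∀ x, HasSum (fun n => (1 - b : ℝ) ^ n * b * g x n) (G x))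
    (hc : HasSum (fun n => (1 - a : ℝ) ^ n * a * G n) c) :
    ∫ z, g z.1 z.2 ∂(geometricMeasure a).prod (geometricMeasure b) = c := by
  have hinner (x : ℕ) : ∫ y, g x y ∂geometricMeasure b = G x :=
    integral_geometricMeasure_of_hasSum hb (hG x)
  have hG_nonneg (x : ℕ) : 0 ≤ G x := (hG x).nonneg fun n =>
    mul_nonneg (mul_nonneg (pow_nonneg (unitInterval.one_minus_nonneg b) n)
      (unitInterval.nonneg b)) (hg x n)
  have hint : Integrable (fun z : ℕ × ℕ => g z.1 z.2)
      ((geometricMeasure a).prod (geometricMeasure b)) := by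
    rw [integrable_prod_iff StronglyMeasurable.of_discrete.aestronglyMeasurable]
    refine ⟨ae_of_all _ fun x => integrable_geometricMeasure_of_hasSum hb (hg x) (hG x), ?_⟩
    refine (integrable_geometricMeasure_of_hasSum ha hG_nonneg hc).congr
      (ae_of_all _ fun x => ?_)
    simp only [Real.norm_of_nonneg (hg _ _), hinner]
  rw [integral_prod _ hint]
  simp only [hinner]
  exact integral_geometricMeasure_of_hasSum ha hc

lemma integral_succ_mul_max_sub_geometricMeasure_prod (ha : a ≠ 0) (hb : b ≠ 0) :
    ∫ z, ((z.1 : ℝ) + 1) * max 0 ((z.2 : ℝ) - z.1)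
        ∂(geometricMeasure a).prod (geometricMeasure b) =
      a * (1 - b) / (b * (1 - (1 - a) * (1 - b)) ^ 2) := by
  have ha0 : (0 : ℝ) < a := unitInterval.pos_iff_ne_zero.2 ha
  have hb0 : (b : ℝ) ≠ 0 := unitInterval.coe_ne_zero.2 hb
  have hr : |(1 - a : ℝ) * (1 - b)| < 1 := by
    rw [abs_of_nonneg (mul_nonneg (unitInterval.one_minus_nonneg a)
      (unitInterval.one_minus_nonneg b))]
    exact mul_lt_one_of_nonneg_of_lt_one_left (unitInterval.one_minus_nonneg a) (by linarith)
      (unitInterval.one_minus_le_one b)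
  refine integral_prod_geometricMeasure_of_hasSum ha hb
    (g := fun x y => ((x : ℝ) + 1) * max 0 ((y : ℝ) - x)) (fun x y => by positivity)
    (G := fun x => ((x : ℝ) + 1) * ((1 - b) ^ (x + 1) / b)) (fun x => ?_) ?_
  · convert! (hasSum_max_sub_geometricMeasure hb x).mul_left ((x : ℝ) + 1) using 1
    funext n
    ring
  · convert! (hasSum_succ_mul_geometric hr).mul_left ((a : ℝ) * (1 - b) / b) using 1
    · funext n
      simp only [mul_pow, pow_succ]
      ring
    · field_simp

end GeometricMeasure

section PositiveGeometric

variable {Ω : Type*} [MeasurableSpace Ω] {P : Measure Ω} {X Y : Ω → ℕ}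

lemma map_eq_map_succ_geometricMeasure {q : unitInterval} (hX : Measurable X)
    (hXpos : ∀ ω, 1 ≤ X ω) (hq : q ≠ 0)
    (hXdist : ∀ j : ℕ, 1 ≤ j → P {ω | X ω = j} = ENNReal.ofReal (q * (1 - q) ^ (j - 1))) :
    P.map X = (geometricMeasure q).map (· + 1) := by
  refine Measure.ext_of_singleton fun n => ?_
  rw [Measure.map_apply hX (measurableSet_singleton n),
    Measure.map_apply (by fun_prop) (measurableSet_singleton n)]
  cases n with
  | zero =>
    have hX0 : X ⁻¹' {0} = ∅ :=
      Set.eq_empty_of_forall_notMem fun ω => Nat.one_le_iff_ne_zero.1 (hXpos ω)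
    have hsucc : (· + 1) ⁻¹' ({0} : Set ℕ) = ∅ := by ext; simp
    rw [hX0, hsucc, measure_empty, measure_empty]
  | succ n =>
    have hsucc : (· + 1) ⁻¹' {n + 1} = {n} := by ext; simp
    rw [hsucc, geometricMeasure_singleton hq, mul_comm]
    exact hXdist (n + 1) (Nat.le_add_left 1 n)

lemma integral_comp_eq_integral_geometricMeasure {q : unitInterval} (hX : Measurable X)
    (hXlaw : P.map X = (geometricMeasure q).map (· + 1)) (f : ℕ → ℝ) :
    ∫ ω, f (X ω) ∂P = ∫ n, f (n + 1) ∂geometricMeasure q := by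
  rw [← integral_map hX.aemeasurable StronglyMeasurable.of_discrete.aestronglyMeasurable, hXlaw,
    integral_map (by fun_prop) StronglyMeasurable.of_discrete.aestronglyMeasurable]

lemma IndepFun.integral_comp₂_eq_integral_prod_geometricMeasure [IsFiniteMeasure P]
    {a b : unitInterval} (hXY : IndepFun X Y P) (hX : Measurable X) (hY : Measurable Y)
    (hXlaw : P.map X = (geometricMeasure a).map (· + 1))
    (hYlaw : P.map Y = (geometricMeasure b).map (· + 1)) (g : ℕ → ℕ → ℝ) :
    ∫ ω, g (X ω) (Y ω) ∂P =
      ∫ z, g (z.1 + 1) (z.2 + 1) ∂(geometricMeasure a).prod (geometricMeasure b) := by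
  have hg (ν : Measure (ℕ × ℕ)) : AEStronglyMeasurable (fun z : ℕ × ℕ => g z.1 z.2) ν :=
    StronglyMeasurable.of_discrete.aestronglyMeasurable
  calc ∫ ω, g (X ω) (Y ω) ∂P = ∫ z, g z.1 z.2 ∂P.map (fun ω => (X ω, Y ω)) :=
        (integral_map (hX.prodMk hY).aemeasurable (hg _)).symm
    _ = ∫ z, g z.1 z.2 ∂((geometricMeasure a).prod (geometricMeasure b)).map
          (Prod.map (· + 1) (· + 1)) := by
        rw [hXY.map_prod_eq_prod_map_map hX.aemeasurable hY.aemeasurable, hXlaw, hYlaw,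
          Measure.map_prod_map _ _ (by fun_prop) (by fun_prop)]
    _ = _ := integral_map (by fun_prop) (hg _)

end PositiveGeometric

end ProbabilityTheory

/-- Theorem 2 (average AoI): with `0 < p < μ < 1`, `β = (μ − p)/(1 − p)`, and
mutually independent geometric random variables `X`, `T`, `S` on the positive
integers with parameters `p`, `β`, `μ` respectively, the average AoI
`Δ̄ = p·(E[X²]/2 + E[X]/2 + E[X·max(0, T − X)] + E[X]·E[S])`
equals `1/p + p/μ + (1 − p)/(μ − p) − p/μ²`. -/
theorem csma_average_aoi
    {Ω : Type*} [MeasurableSpace Ω] (P : Measure Ω) [IsProbabilityMeasure P]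
    (p μ β : ℝ) (hp0 : 0 < p) (hpμ : p < μ) (hμ1 : μ < 1)
    (hβ : β = (μ - p) / (1 - p))
    (X T S : Ω → ℕ) (hX : Measurable X) (hT : Measurable T) (hS : Measurable S)
    (hind : iIndepFun ![X, T, S] P)
    (hXpos : ∀ ω, 1 ≤ X ω) (hTpos : ∀ ω, 1 ≤ T ω) (hSpos : ∀ ω, 1 ≤ S ω)
    (hXdist : ∀ j : ℕ, 1 ≤ j →
      P {ω | X ω = j} = ENNReal.ofReal (p * (1 - p) ^ (j - 1)))
    (hTdist : ∀ j : ℕ, 1 ≤ j →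
      P {ω | T ω = j} = ENNReal.ofReal (β * (1 - β) ^ (j - 1)))
    (hSdist : ∀ j : ℕ, 1 ≤ j →
      P {ω | S ω = j} = ENNReal.ofReal (μ * (1 - μ) ^ (j - 1))) :
    p * ((∫ ω, ((X ω : ℝ)) ^ 2 ∂P) / 2 + (∫ ω, (X ω : ℝ) ∂P) / 2 +
        (∫ ω, (X ω : ℝ) * max 0 ((T ω : ℝ) - (X ω : ℝ)) ∂P) +
        (∫ ω, (X ω : ℝ) ∂P) * ∫ ω, (S ω : ℝ) ∂P) =
      1 / p + p / μ + (1 - p) / (μ - p) - p / μ ^ 2 := by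
  have hp1 : p < 1 := hpμ.trans hμ1
  have hμ0 : 0 < μ := hp0.trans hpμ
  have hβ0 : 0 < β := by rw [hβ]; exact div_pos (by linarith) (by linarith)
  have hβ1 : β < 1 := by rw [hβ, div_lt_one (by linarith)]; linarith
  have ha : (⟨p, hp0.le, hp1.le⟩ : unitInterval) ≠ 0 := unitInterval.pos_iff_ne_zero.1 hp0
  have hb : (⟨β, hβ0.le, hβ1.le⟩ : unitInterval) ≠ 0 := unitInterval.pos_iff_ne_zero.1 hβ0
  have hm : (⟨μ, hμ0.le, hμ1.le⟩ : unitInterval) ≠ 0 := unitInterval.pos_iff_ne_zero.1 hμ0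
  have hXlaw := map_eq_map_succ_geometricMeasure hX hXpos ha hXdist
  have hTlaw := map_eq_map_succ_geometricMeasure hT hTpos hb hTdist
  have hSlaw := map_eq_map_succ_geometricMeasure hS hSpos hm hSdist
  have hXT : IndepFun X T P := hind.indepFun (i := 0) (j := 1) (by decide)
  rw [integral_comp_eq_integral_geometricMeasure hX hXlaw (fun n => (n : ℝ) ^ 2),
    integral_comp_eq_integral_geometricMeasure hX hXlaw (fun n => (n : ℝ)),
    integral_comp_eq_integral_geometricMeasure hS hSlaw (fun n => (n : ℝ)),
    hXT.integral_comp₂_eq_integral_prod_geometricMeasure hX hT hXlaw hTlaw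
      (fun x t => (x : ℝ) * max 0 ((t : ℝ) - x))]
  push_cast
  simp only [add_sub_add_right_eq_sub]
  rw [integral_succ_sq_geometricMeasure ha, integral_succ_geometricMeasure ha,
    integral_succ_geometricMeasure hm, integral_succ_mul_max_sub_geometricMeasure_prod ha hb]
  have h1p : 1 - p ≠ 0 := by linarith
  have hμp : μ - p ≠ 0 := by linarith
  have hμ : 1 - (1 - p) * (1 - β) = μ := by rw [hβ]; field_simp; ring
  simp only [hμ]
  rw [hβ]
  field_simp
  ring
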